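/- arXiv:1102.2904 — 2 statements merged into one kernel-verified Lean document; each statement's English description precedes it below -/
import Mathlib

section
/- In the symmetric model, for every x ≥ 0 the SINR of a single user satisfies the closed-form tail probability P(α_1/(1+β_1) > x) = e^{−x/ρ} · (1+x)^{−N}. -/
/-!
The SINR of user 1 exceeds `x` exactly when its signal gain `G` exceeds `x / ρ + x * S`, where `S`
is the sum of the `N` interference gains. Since `G` is a standard exponential independent of `S ≥ 0`,
conditioning on `S` gives `P(G > x / ρ + x * S) = E[exp (-(x / ρ + x * S))] = exp (-x / ρ) * M_S(-x)`,
and by independence `M_S(-x)` is the `N`-th power of the Laplace transform `1 / (1 + x)` of `Exp(1)`.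
-/

open MeasureTheory ProbabilityTheory Filter Real

/-- The maximum of `f k` over the indices `k ∈ {1, …, n}`. -/
noncomputable def maxIcc (n : ℕ) (f : ℕ → ℝ) : ℝ :=
  ⨆ k : (Finset.Icc 1 n : Finset ℕ), f k

open Set

namespace ProbabilityTheory

lemma expMeasure_Ioi {r t : ℝ} (hr : 0 < r) (ht : 0 ≤ t) :
    expMeasure r (Ioi t) = ENNReal.ofReal (exp (-(r * t))) := by
  have := isProbabilityMeasure_expMeasure hr
  have hexp : exp (-(r * t)) ≤ 1 := exp_le_one_iff.2 (by nlinarith)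
  rw [← compl_Iic, prob_compl_eq_one_sub measurableSet_Iic, ← ofReal_cdf, cdf_expMeasure_eq hr,
    if_pos ht, ← ENNReal.ofReal_one, ← ENNReal.ofReal_sub _ (sub_nonneg.2 hexp), sub_sub_cancel]

lemma expMeasure_Iio_zero (r : ℝ) : expMeasure r (Iio 0) = 0 := by
  rw [expMeasure, gammaMeasure, withDensity_apply _ measurableSet_Iio,
    lintegral_gammaPDF_of_nonpos le_rfl]

lemma ae_nonneg_expMeasure (r : ℝ) : ∀ᵐ u ∂expMeasure r, 0 ≤ u := by
  rw [ae_iff]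
  simp only [not_le]
  exact expMeasure_Iio_zero r

lemma measurable_exponentialPDF (r : ℝ) : Measurable (exponentialPDF r) :=
  (measurable_exponentialPDFReal r).ennreal_ofReal

lemma mgf_id_expMeasure {r t : ℝ} (hr : 0 ≤ r) (ht : t < r) :
    mgf id (expMeasure r) t = r / (r - t) := by
  have hdensity : expMeasure r = volume.withDensity (exponentialPDF r) := rfl
  have hpdf : ∀ u, (exponentialPDF r u).toReal • exp (t * id u)
      = indicator (Ici 0) (fun u => r * exp ((t - r) * u)) u := by
    intro u
    rcases le_or_gt 0 u with hu | hu
    · rw [indicator_of_mem (mem_Ici.2 hu), exponentialPDF_of_nonneg hu,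
        ENNReal.toReal_ofReal (by positivity), smul_eq_mul, mul_assoc, ← exp_add, id]
      ring_nf
    · rw [indicator_of_notMem (notMem_Ici.2 hu), exponentialPDF_of_neg hu, ENNReal.toReal_zero,
        zero_smul]
  rw [mgf, hdensity, integral_withDensity_eq_integral_toReal_smul (measurable_exponentialPDF r)
      (ae_of_all _ fun _ => ENNReal.ofReal_lt_top),
    integral_congr_ae (ae_of_all _ hpdf), integral_indicator measurableSet_Ici,
    integral_Ici_eq_integral_Ioi, integral_const_mul, integral_exp_mul_Ioi (by linarith), mul_zero,
    exp_zero, neg_div, ← div_neg, neg_sub, mul_one_div]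

variable {Ω : Type*} [MeasurableSpace Ω] {P : Measure Ω} {X Y : Ω → ℝ} {r : ℝ}

lemma aemeasurable_of_map_eq_expMeasure (hr : 0 < r) (hX : P.map X = expMeasure r) :
    AEMeasurable X P :=
  have := isProbabilityMeasure_expMeasure hr
  aemeasurable_of_map_neZero (by rw [hX]; infer_instance)

lemma ae_nonneg_of_map_eq_expMeasure (hr : 0 < r) (hX : P.map X = expMeasure r) :
    ∀ᵐ ω ∂P, 0 ≤ X ω :=
  ae_of_ae_map (aemeasurable_of_map_eq_expMeasure hr hX) (hX ▸ ae_nonneg_expMeasure r)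

lemma mgf_of_map_eq_expMeasure (hr : 0 < r) (hX : P.map X = expMeasure r) {t : ℝ} (ht : t < r) :
    mgf X P t = r / (r - t) := by
  rw [← mgf_id_map (aemeasurable_of_map_eq_expMeasure hr hX), hX, mgf_id_expMeasure hr.le ht]

lemma measure_lt_of_indepFun_of_map_eq_expMeasure [IsFiniteMeasure P] (hr : 0 < r)
    (hY : Measurable Y) (hX : Measurable X) (hYX : IndepFun Y X P)
    (hXdist : P.map X = expMeasure r) (hYnonneg : ∀ᵐ ω ∂P, 0 ≤ Y ω) :
    P {ω | Y ω < X ω} = ∫⁻ ω, ENNReal.ofReal (exp (-r * Y ω)) ∂P := by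
  have := isProbabilityMeasure_expMeasure hr
  have hlt : MeasurableSet {p : ℝ × ℝ | p.1 < p.2} := measurableSet_lt measurable_fst measurable_snd
  have hmap : P.map (fun ω => (Y ω, X ω)) = (P.map Y).prod (expMeasure r) := by
    rw [← hXdist]
    exact (indepFun_iff_map_prod_eq_prod_map_map hY.aemeasurable hX.aemeasurable).1 hYX
  calc P {ω | Y ω < X ω}
      = (P.map Y).prod (expMeasure r) {p | p.1 < p.2} := by
        rw [← hmap, Measure.map_apply (hY.prodMk hX) hlt]; rfl
    _ = ∫⁻ y, expMeasure r (Ioi y) ∂P.map Y := Measure.prod_apply hlt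
    _ = ∫⁻ y, ENNReal.ofReal (exp (-r * y)) ∂P.map Y := by
        refine lintegral_congr_ae ?_
        filter_upwards [(ae_map_iff hY.aemeasurable measurableSet_Ici).2 hYnonneg] with y hy
        rw [expMeasure_Ioi hr hy, neg_mul]
    _ = ∫⁻ ω, ENNReal.ofReal (exp (-r * Y ω)) ∂P := lintegral_map (by fun_prop) hY

lemma measureReal_lt_of_indepFun_of_map_eq_expMeasure [IsFiniteMeasure P] (hr : 0 < r)
    (hY : Measurable Y) (hX : Measurable X) (hYX : IndepFun Y X P)
    (hXdist : P.map X = expMeasure r) (hYnonneg : ∀ᵐ ω ∂P, 0 ≤ Y ω) :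
    P.real {ω | Y ω < X ω} = mgf Y P (-r) := by
  rw [measureReal_def, measure_lt_of_indepFun_of_map_eq_expMeasure hr hY hX hYX hXdist hYnonneg,
    mgf, integral_eq_lintegral_of_nonneg_ae (ae_of_all _ fun _ => (exp_pos _).le) (by fun_prop)]

lemma iIndepFun.mgf_sum_of_map_eq_expMeasure {ι : Type*} {X : ι → Ω → ℝ} (h_indep : iIndepFun X P)
    (hr : 0 < r) (hX : ∀ i, P.map (X i) = expMeasure r) (s : Finset ι) {t : ℝ} (ht : t < r) :
    mgf (∑ i ∈ s, X i) P t = (r / (r - t)) ^ s.card := by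
  rw [h_indep.mgf_sum₀ fun i => aemeasurable_of_map_eq_expMeasure hr (hX i)]
  exact Finset.prod_eq_pow_card fun i _ => mgf_of_map_eq_expMeasure hr (hX i) ht

end ProbabilityTheory

lemma lt_mul_div_one_add_mul_iff {ρ x g s : ℝ} (hρ : 0 < ρ) (hs : 0 < 1 + ρ * s) :
    x < ρ * g / (1 + ρ * s) ↔ x / ρ + x * s < g := by
  rw [lt_div_iff₀ hs, div_add' _ _ _ hρ.ne', div_lt_iff₀ hρ]
  constructor <;> intro h <;> linarith

theorem sinr_tail_closed_form_general
    {Ω : Type*} [MeasurableSpace Ω] (P : Measure Ω) [IsProbabilityMeasure P]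
    (N : ℕ) (ρ : ℝ) (hρ : 0 < ρ)
    (G : Option (Fin N) × ℕ → Ω → ℝ) (hGmeas : ∀ i, Measurable (G i))
    (hGindep : iIndepFun G P)
    (hGdist : ∀ i, Measure.map (G i) P = expMeasure 1)
    (α β : ℕ → Ω → ℝ)
    (hα : ∀ k ω, α k ω = ρ * G (none, k) ω)
    (hβ : ∀ k ω, β k ω = ρ * ∑ j : Fin N, G (some j, k) ω) :
    ∀ x : ℝ, 0 ≤ x →
      (P {ω | x < α 1 ω / (1 + β 1 ω)}).toReal
        = Real.exp (-x / ρ) * ((1 + x) ^ N)⁻¹ := by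
  intro x hx
  set interferers := (Finset.univ : Finset (Fin N)).map (Function.Embedding.some.trans (.sectL _ 1))
  set S := ∑ i ∈ interferers, G i
  have hS : ∀ ω, S ω = ∑ j : Fin N, G (some j, 1) ω := fun ω => by
    simp [S, interferers, Finset.sum_apply]
  have hSnonneg : ∀ᵐ ω ∂P, 0 ≤ S ω := by
    filter_upwards [ae_all_iff.2 fun i => ae_nonneg_of_map_eq_expMeasure one_pos (hGdist i)]
      with ω hω
    rw [hS]
    exact Finset.sum_nonneg fun j _ => hω _
  set Y : Ω → ℝ := fun ω => x / ρ + x * S ω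
  have hevent : {ω | x < α 1 ω / (1 + β 1 ω)} =ᵐ[P] {ω | Y ω < G (none, 1) ω} := by
    filter_upwards [hSnonneg] with ω hω
    simp only [hα, hβ, ← hS, eq_iff_iff]
    exact lt_mul_div_one_add_mul_iff hρ (by positivity)
  have hindep : IndepFun Y (G (none, 1)) P :=
    (hGindep.indepFun_finsetSum_of_notMem hGmeas (s := interferers) (i := (none, 1))
      (by simp [interferers])).comp (φ := fun u => x / ρ + x * u) (by fun_prop) measurable_id
  have hYnonneg : ∀ᵐ ω ∂P, 0 ≤ Y ω := by
    filter_upwards [hSnonneg] with ω hω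
    positivity
  have hSmgf : mgf S P (-x) = ((1 + x) ^ N)⁻¹ := by
    rw [hGindep.mgf_sum_of_map_eq_expMeasure one_pos hGdist _ (by linarith)]
    simp [interferers]
  rw [measure_congr hevent, ← measureReal_def,
    measureReal_lt_of_indepFun_of_map_eq_expMeasure one_pos (by fun_prop) (hGmeas _) hindep
      (hGdist _) hYnonneg, mgf_const_add, mgf_const_mul, mul_neg_one, hSmgf, neg_one_mul, neg_div]

/-- In the symmetric model, for every `x ≥ 0` the SINR of a single user satisfies
`P(α₁/(1+β₁) > x) = exp (-x/ρ) * (1+x)^(-N)`. -/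
theorem sinr_tail_closed_form
    {Ω : Type*} [MeasurableSpace Ω] (P : Measure Ω) [IsProbabilityMeasure P]
    (N : ℕ) (hN : 1 ≤ N) (ρ : ℝ) (hρ : 0 < ρ)
    (G : Option (Fin N) × ℕ → Ω → ℝ) (hGmeas : ∀ i, Measurable (G i))
    (hGindep : iIndepFun G P)
    (hGdist : ∀ i, Measure.map (G i) P = expMeasure 1)
    (α β : ℕ → Ω → ℝ)
    (hα : ∀ k ω, α k ω = ρ * G (none, k) ω)
    (hβ : ∀ k ω, β k ω = ρ * ∑ j : Fin N, G (some j, k) ω) :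
    ∀ x : ℝ, 0 ≤ x →
      (P {ω | x < α 1 ω / (1 + β 1 ω)}).toReal
        = Real.exp (-x / ρ) * ((1 + x) ^ N)⁻¹ :=
  sinr_tail_closed_form_general P N ρ hρ G hGmeas hGindep hGdist α β hα hβ
end

section
/- In the symmetric model, the max-SINR value Γ_n = max_{1≤k≤n} α_k/(1+β_k) satisfies log P(Γ_n ≤ ρ·log n − ρ·(N+1)·log(log n)) / log n → −ρ^{−N} as n → ∞; in particular when ρ = 1 this probability is n^{−1+o(1)}. -/
/-!
For a single user let `X` be its signal gain and `S` the sum of its `N` interference gains.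
The event `τ < ρX / (1 + ρS)` is `τ/ρ + τS < X`; conditioning on `S` and using `P(X > y) = e^{-y}`
gives the tail `p(τ) = e^{-τ/ρ} E[e^{-τS}] = e^{-τ/ρ} (1 + τ)^{-N}`. The users are independent, so
`P(Γ_n ≤ τ) = (1 - p(τ))^n` and `log P(Γ_n ≤ τ) = n log (1 - p(τ))`.
At `τ_n = ρ log n - ρ(N+1) log log n` one has `e^{-τ_n/ρ} = (log n)^{N+1} / n`, hence
`n p(τ_n) = log n · (log n / (1 + τ_n))^N ∼ ρ^{-N} log n`, while `p(τ_n) → 0` and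
`log (1 - p) ∼ -p`.
-/

open MeasureTheory ProbabilityTheory Filter Real

open Finset
open scoped ENNReal Topology

instance isProbabilityMeasure_expMeasure_one : IsProbabilityMeasure (expMeasure 1) :=
  isProbabilityMeasure_expMeasure one_pos

lemma expMeasure_one_Ioi {c : ℝ} (hc : 0 ≤ c) :
    expMeasure 1 (Set.Ioi c) = ENNReal.ofReal (exp (-c)) := by
  have hexp : exp (-c) ≤ 1 := exp_le_one_iff.2 (neg_nonpos.2 hc)
  rw [← Set.compl_Iic, prob_compl_eq_one_sub measurableSet_Iic, ← ofReal_cdf,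
    cdf_expMeasure_eq one_pos, if_pos hc, one_mul, ← ENNReal.ofReal_one,
    ← ENNReal.ofReal_sub _ (sub_nonneg.2 hexp), sub_sub_cancel]

lemma ae_nonneg_expMeasure_one : ∀ᵐ x ∂expMeasure 1, 0 ≤ x := by
  have : expMeasure 1 (Set.Iic 0) = 0 := by
    rw [← ofReal_cdf, cdf_expMeasure_eq one_pos]
    simp
  simp only [ae_iff, not_le]
  exact measure_mono_null (fun x (hx : x < 0) => hx.le) this

lemma lintegral_exp_neg_mul_expMeasure_one {τ : ℝ} (hτ : 0 ≤ τ) :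
    ∫⁻ x, ENNReal.ofReal (exp (-(τ * x))) ∂expMeasure 1 = ENNReal.ofReal (1 + τ)⁻¹ := by
  have hpdf : Measurable (exponentialPDF 1) := (measurable_exponentialPDFReal 1).ennreal_ofReal
  have hintegral : ∫ x in Set.Ici 0, exp (-(1 + τ) * x) = (1 + τ)⁻¹ := by
    rw [integral_Ici_eq_integral_Ioi, integral_exp_mul_Ioi (by linarith), mul_zero, exp_zero,
      neg_div_neg_eq, one_div]
  rw [show expMeasure 1 = volume.withDensity (exponentialPDF 1) from rfl,
    lintegral_withDensity_eq_lintegral_mul₀ hpdf.aemeasurable (by fun_prop), ← hintegral,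
    ofReal_integral_eq_lintegral_ofReal ?_ (ae_of_all _ fun x => (exp_pos _).le),
    ← lintegral_indicator measurableSet_Ici]
  · congr 1 with x
    by_cases hx : 0 ≤ x
    · rw [Set.indicator_of_mem (show x ∈ Set.Ici 0 from hx), Pi.mul_apply,
        exponentialPDF_of_nonneg hx, ← ENNReal.ofReal_mul (by positivity), one_mul, ← exp_add]
      ring_nf
    · simp [hx, exponentialPDF_eq]
  · exact (integrableOn_Ici_iff_integrableOn_Ioi).2 (exp_neg_integrableOn_Ioi 0 (by linarith))

theorem ProbabilityTheory.iIndepFun.iIndepFun_columns {Ω ι κ β : Type*} [MeasurableSpace Ω]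
    {P : Measure Ω} [Fintype ι] [MeasurableSpace β] {X : ι × κ → Ω → β} (hX : iIndepFun X P)
    (hXm : ∀ p, Measurable (X p)) :
    iIndepFun (fun k ω i => X (i, k) ω) P := by
  classical
  rw [iIndepFun_iff_measure_inter_preimage_eq_mul]
  intro S
  induction S using Finset.induction_on with
  | empty => simp [hX.isProbabilityMeasure]
  | insert a S ha ih =>
    intro B hB
    have hmem : ∀ k ∈ S, ∀ i, (i, k) ∈ (univ : Finset ι) ×ˢ S := fun k hk i =>
      mem_product.2 ⟨mem_univ i, hk⟩
    have hcol : ∀ (T : Finset (ι × κ)) (k : κ) (hk : ∀ i, (i, k) ∈ T),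
        Measurable fun (x : T → β) i => x ⟨(i, k), hk i⟩ := fun T k hk =>
      measurable_pi_lambda _ fun i => measurable_pi_apply _
    let C : Set ((univ ×ˢ S : Finset (ι × κ)) → β) :=
      ⋂ k : S, (fun x i => x ⟨(i, k), hmem k k.2 i⟩) ⁻¹' B k
    have hC : MeasurableSet C := MeasurableSet.iInter fun k =>
      hcol _ k (hmem k k.2) (hB k (mem_insert_of_mem k.2))
    have hdisj : Disjoint ((univ : Finset ι) ×ˢ {a}) (univ ×ˢ S) := by
      simp only [disjoint_left, mem_product, mem_singleton]
      rintro ⟨i, k⟩ ⟨-, rfl⟩ ⟨-, hk⟩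
      exact ha hk
    have hind := (hX.indepFun_finset _ _ hdisj hXm).measure_inter_preimage_eq_mul _ C
      (hcol _ a (fun i => by simp) (hB a (mem_insert_self a S))) hC
    rw [set_biInter_insert, prod_insert ha, ← ih fun k hk => hB k (mem_insert_of_mem hk)]
    convert hind using 3 <;> ext ω <;> simp [C]

noncomputable def sinr {ι : Type*} [Fintype ι] (ρ : ℝ) (g : Option ι → ℝ) : ℝ :=
  ρ * g none / (1 + ρ * ∑ j, g (some j))

noncomputable def sinrTail (N : ℕ) (ρ τ : ℝ) : ℝ :=
  exp (-(τ / ρ)) / (1 + τ) ^ N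

lemma sinrTail_le_one (N : ℕ) {ρ τ : ℝ} (hρ : 0 ≤ ρ) (hτ : 0 ≤ τ) : sinrTail N ρ τ ≤ 1 :=
  div_le_one_of_le₀ ((exp_le_one_iff.2 (neg_nonpos.2 (div_nonneg hτ hρ))).trans
    (one_le_pow₀ (by linarith))) (by positivity)

lemma measurable_sinr {ι : Type*} [Fintype ι] (ρ : ℝ) : Measurable (sinr (ι := ι) ρ) := by
  unfold sinr
  fun_prop

section Probability

variable {Ω : Type*} [MeasurableSpace Ω] {P : Measure Ω}

lemma measure_lt_eq_lintegral_exp_neg [IsFiniteMeasure P] {X Y : Ω → ℝ} (hX : Measurable X)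
    (hY : Measurable Y) (hXlaw : P.map X = expMeasure 1) (hYX : IndepFun Y X P)
    (hY0 : ∀ᵐ ω ∂P, 0 ≤ Y ω) :
    P {ω | Y ω < X ω} = ∫⁻ ω, ENNReal.ofReal (exp (-Y ω)) ∂P := by
  have hU : MeasurableSet {p : ℝ × ℝ | p.1 < p.2} := measurableSet_lt measurable_fst measurable_snd
  have htail : ∀ᵐ y ∂P.map Y, expMeasure 1 (Prod.mk y ⁻¹' {p | p.1 < p.2}) =
      ENNReal.ofReal (exp (-y)) := by
    filter_upwards [(ae_map_iff hY.aemeasurable measurableSet_Ici).2 hY0] with y hy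
    exact expMeasure_one_Ioi hy
  rw [← Set.preimage_ofPred_eq (p := fun p : ℝ × ℝ => p.1 < p.2) (f := fun ω => (Y ω, X ω)),
    ← Measure.map_apply (hY.prodMk hX) hU,
    (indepFun_iff_map_prod_eq_prod_map_map hY.aemeasurable hX.aemeasurable).1 hYX,
    Measure.prod_apply hU, hXlaw, lintegral_congr_ae htail, lintegral_map (by fun_prop) hY]

lemma lintegral_exp_neg_mul_sum {ι : Type*} {X : ι → Ω → ℝ} (hX : iIndepFun X P)
    (hXm : ∀ i, Measurable (X i)) (hXlaw : ∀ i, P.map (X i) = expMeasure 1) (s : Finset ι)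
    {τ : ℝ} (hτ : 0 ≤ τ) :
    ∫⁻ ω, ENNReal.ofReal (exp (-(τ * ∑ i ∈ s, X i ω))) ∂P = ENNReal.ofReal (1 + τ)⁻¹ ^ #s := by
  have hprod : ∀ ω, ENNReal.ofReal (exp (-(τ * ∑ i ∈ s, X i ω))) =
      ∏ i ∈ s, ENNReal.ofReal (exp (-(τ * X i ω))) := fun ω => by
    rw [mul_sum, ← sum_neg_distrib, exp_sum,
      ENNReal.ofReal_prod_of_nonneg fun i _ => (exp_pos _).le]
  simp_rw [hprod]
  rw [lintegral_prod_eq_prod_lintegral_of_indepFun s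
      (fun i ω => ENNReal.ofReal (exp (-(τ * X i ω))))
      (hX.comp (fun _ x => ENNReal.ofReal (exp (-(τ * x)))) fun _ => by fun_prop)
      fun i => by fun_prop, ← prod_const]
  refine prod_congr rfl fun i _ => ?_
  rw [← lintegral_exp_neg_mul_expMeasure_one hτ, ← hXlaw i,
    lintegral_map (by fun_prop) (hXm i)]

lemma measure_lt_sinr [IsProbabilityMeasure P] {ι : Type*} [Fintype ι] {G : Option ι → Ω → ℝ}
    (hG : iIndepFun G P) (hGm : ∀ i, Measurable (G i)) (hGlaw : ∀ i, P.map (G i) = expMeasure 1)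
    {ρ τ : ℝ} (hρ : 0 < ρ) (hτ : 0 ≤ τ) :
    P {ω | τ < sinr ρ (fun i => G i ω)} = ENNReal.ofReal (sinrTail (Fintype.card ι) ρ τ) := by
  set S : Ω → ℝ := fun ω => ∑ j, G (some j) ω
  have hS0 : ∀ᵐ ω ∂P, 0 ≤ S ω := by
    have hG0 : ∀ i, ∀ᵐ ω ∂P, 0 ≤ G i ω := fun i =>
      ae_of_ae_map (hGm i).aemeasurable ((hGlaw i).symm ▸ ae_nonneg_expMeasure_one)
    filter_upwards [ae_all_iff.2 hG0] with ω hω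
    exact sum_nonneg fun j _ => hω (some j)
  have hSX : IndepFun S (G none) P := by
    have h := hG.indepFun_finsetSum_of_notMem hGm (s := univ.map .some) (i := none) (by simp)
    convert h using 1
    ext ω
    simp [S]
  have hevent : {ω | τ < sinr ρ (fun i => G i ω)} =ᵐ[P] {ω | τ / ρ + τ * S ω < G none ω} := by
    filter_upwards [hS0] with ω hω
    have hden : 0 < 1 + ρ * S ω := by positivity
    change (τ < sinr ρ (fun i => G i ω)) = (τ / ρ + τ * S ω < G none ω)
    rw [sinr, lt_div_iff₀ hden, div_add' _ _ _ hρ.ne', div_lt_iff₀ hρ]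
    exact propext ⟨fun h => by linarith, fun h => by linarith⟩
  have hY : Measurable fun ω => τ / ρ + τ * S ω := by fun_prop
  rw [measure_congr hevent, measure_lt_eq_lintegral_exp_neg (hGm none) hY (hGlaw none)
    (hSX.comp (by fun_prop : Measurable fun s => τ / ρ + τ * s) measurable_id)
    (by filter_upwards [hS0] with ω hω; positivity)]
  simp_rw [neg_add, exp_add, ENNReal.ofReal_mul (exp_pos _).le]
  rw [lintegral_const_mul _ (by fun_prop), lintegral_exp_neg_mul_sum
    (hG.precomp (Option.some_injective ι)) (fun j => hGm _) (fun j => hGlaw _) univ hτ, card_univ,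
    ← ENNReal.ofReal_pow (by positivity), ← ENNReal.ofReal_mul (exp_pos _).le, inv_pow,
    ← div_eq_mul_inv, sinrTail]

lemma maxIcc_le_iff {n : ℕ} (hn : 1 ≤ n) {f : ℕ → ℝ} {a : ℝ} :
    maxIcc n f ≤ a ↔ ∀ k ∈ Icc 1 n, f k ≤ a := by
  have : Nonempty (Icc 1 n) := ⟨⟨1, mem_Icc.2 ⟨le_rfl, hn⟩⟩⟩
  rw [maxIcc, ciSup_le_iff (Set.finite_range _).bddAbove, Subtype.forall]

lemma measure_maxIcc_sinr_le [IsProbabilityMeasure P] {ι : Type*} [Fintype ι]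
    {G : Option ι × ℕ → Ω → ℝ} (hG : iIndepFun G P) (hGm : ∀ i, Measurable (G i))
    (hGlaw : ∀ i, P.map (G i) = expMeasure 1) {ρ τ : ℝ} (hρ : 0 < ρ) (hτ : 0 ≤ τ) {n : ℕ}
    (hn : 1 ≤ n) :
    P {ω | maxIcc n (fun k => sinr ρ (fun i => G (i, k) ω)) ≤ τ} =
      (1 - ENNReal.ofReal (sinrTail (Fintype.card ι) ρ τ)) ^ n := by
  have hsinr : iIndepFun (fun k ω => sinr ρ (fun i => G (i, k) ω)) P :=
    (hG.iIndepFun_columns hGm).comp (fun _ => sinr ρ) fun _ => measurable_sinr ρ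
  have hset : {ω | maxIcc n (fun k => sinr ρ (fun i => G (i, k) ω)) ≤ τ} =
      ⋂ k ∈ Icc 1 n, (fun ω => sinr ρ (fun i => G (i, k) ω)) ⁻¹' Set.Iic τ := by
    ext ω
    simp [maxIcc_le_iff hn]
  have hfactor : ∀ k, P ((fun ω => sinr ρ (fun i => G (i, k) ω)) ⁻¹' Set.Iic τ) =
      1 - ENNReal.ofReal (sinrTail (Fintype.card ι) ρ τ) := fun k => by
    have hm : Measurable fun ω => sinr ρ (fun i => G (i, k) ω) :=
      (measurable_sinr ρ).comp (measurable_pi_lambda _ fun i => hGm (i, k))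
    rw [← Set.compl_Ioi, Set.preimage_compl, prob_compl_eq_one_sub (hm measurableSet_Ioi),
      ← measure_lt_sinr (hG.precomp (Prod.mk_left_injective k)) (fun i => hGm _)
        (fun i => hGlaw _) hρ hτ]
    rfl
  rw [hset, iIndepFun_iff_measure_inter_preimage_eq_mul.1 hsinr _ fun _ _ => measurableSet_Iic,
    prod_congr rfl fun k _ => hfactor k, prod_const, Nat.card_Icc, Nat.add_sub_cancel]

lemma toReal_measure_maxIcc_sinr_le [IsProbabilityMeasure P] {ι : Type*} [Fintype ι]
    {G : Option ι × ℕ → Ω → ℝ} (hG : iIndepFun G P) (hGm : ∀ i, Measurable (G i))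
    (hGlaw : ∀ i, P.map (G i) = expMeasure 1) {ρ τ : ℝ} (hρ : 0 < ρ) (hτ : 0 ≤ τ) {n : ℕ}
    (hn : 1 ≤ n) :
    (P {ω | maxIcc n (fun k => sinr ρ (fun i => G (i, k) ω)) ≤ τ}).toReal =
      (1 - sinrTail (Fintype.card ι) ρ τ) ^ n := by
  rw [measure_maxIcc_sinr_le hG hGm hGlaw hρ hτ hn, ENNReal.toReal_pow,
    ENNReal.toReal_sub_of_le (ENNReal.ofReal_le_one.2 (sinrTail_le_one _ hρ.le hτ))
      ENNReal.one_ne_top, ENNReal.toReal_one,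
    ENNReal.toReal_ofReal (by unfold sinrTail; positivity)]

end Probability

section Asymptotics

lemma tendsto_log_one_sub_div_self :
    Tendsto (fun t : ℝ => log (1 - t) / t) (𝓝[≠] 0) (𝓝 (-1)) := by
  have h : HasDerivAt (fun t : ℝ => log (1 - t)) (-1) 0 := by
    simpa using ((hasDerivAt_id (0 : ℝ)).const_sub 1).log (by norm_num)
  simpa [div_eq_inv_mul] using h.tendsto_slope_zero

lemma tendsto_mul_log_one_sub_div {α : Type*} {l : Filter α} {m a p : α → ℝ} {L : ℝ}
    (hp : Tendsto p l (𝓝[≠] 0)) (h : Tendsto (fun x => m x * p x / a x) l (𝓝 L)) :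
    Tendsto (fun x => m x * log (1 - p x) / a x) l (𝓝 (-L)) := by
  have hlim := (tendsto_log_one_sub_div_self.comp hp).mul h
  rw [neg_one_mul] at hlim
  refine hlim.congr' ?_
  filter_upwards [hp.eventually eventually_mem_nhdsWithin] with x (hx : p x ≠ 0)
  simp only [Function.comp_apply]
  field_simp

lemma tendsto_log_div_self_atTop : Tendsto (fun x : ℝ => log x / x) atTop (𝓝 0) := by
  simpa using isLittleO_log_id_atTop.tendsto_div_nhds_zero

lemma tendsto_log_nat_atTop : Tendsto (fun n : ℕ => log n) atTop atTop :=
  tendsto_log_atTop.comp tendsto_natCast_atTop_atTop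

noncomputable def lowerThreshold (N : ℕ) (ρ : ℝ) (n : ℕ) : ℝ :=
  ρ * log n - ρ * ((N : ℝ) + 1) * log (log n)

lemma tendsto_one_add_lowerThreshold_div_log (N : ℕ) (ρ : ℝ) :
    Tendsto (fun n => (1 + lowerThreshold N ρ n) / log n) atTop (𝓝 ρ) := by
  have hlim := (tendsto_inv_atTop_zero.comp tendsto_log_nat_atTop).add
    (tendsto_const_nhds (x := ρ) |>.sub
      ((tendsto_log_div_self_atTop.comp tendsto_log_nat_atTop).const_mul (ρ * ((N : ℝ) + 1))))
  simp only [mul_zero, sub_zero, zero_add] at hlim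
  refine hlim.congr' ?_
  filter_upwards [tendsto_log_nat_atTop.eventually_gt_atTop 0] with n hn
  simp only [Function.comp_apply, lowerThreshold]
  field_simp

variable (N : ℕ) {ρ : ℝ}

lemma tendsto_lowerThreshold_atTop (hρ : 0 < ρ) : Tendsto (lowerThreshold N ρ) atTop atTop := by
  have h : Tendsto (fun n => 1 + lowerThreshold N ρ n) atTop atTop := by
    refine (tendsto_log_nat_atTop.atTop_mul_pos hρ
      (tendsto_one_add_lowerThreshold_div_log N ρ)).congr' ?_
    filter_upwards [tendsto_log_nat_atTop.eventually_gt_atTop 0] with n hn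
    field_simp
  simpa using tendsto_atTop_add_const_left _ (-1) h

lemma exp_neg_lowerThreshold_div (hρ : ρ ≠ 0) {n : ℕ} (hn : 1 < n) :
    exp (-(lowerThreshold N ρ n / ρ)) = log n ^ (N + 1) / n := by
  have hn1 : (1 : ℝ) < n := by exact_mod_cast hn
  have hdiv : lowerThreshold N ρ n / ρ = log n - ((N + 1 : ℕ) : ℝ) * log (log n) := by
    rw [lowerThreshold]
    field_simp
    push_cast
    ring
  rw [hdiv, neg_sub, exp_sub, exp_nat_mul, exp_log (log_pos hn1), exp_log (by linarith)]

lemma tendsto_mul_sinrTail_lowerThreshold_div_log (hρ : 0 < ρ) :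
    Tendsto (fun n : ℕ => n * sinrTail N ρ (lowerThreshold N ρ n) / log n) atTop
      (𝓝 (ρ ^ N)⁻¹) := by
  have hlim := (tendsto_one_add_lowerThreshold_div_log N ρ).inv₀ hρ.ne' |>.pow N
  rw [inv_pow] at hlim
  refine hlim.congr' ?_
  filter_upwards [eventually_gt_atTop 1,
    (tendsto_lowerThreshold_atTop N hρ).eventually_ge_atTop 0] with n hn hτ
  have hn1 : (1 : ℝ) < n := by exact_mod_cast hn
  have := log_pos hn1
  have : 0 < 1 + lowerThreshold N ρ n := by linarith
  rw [sinrTail, exp_neg_lowerThreshold_div N hρ.ne' hn, inv_div, div_pow]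
  field_simp
  ring

lemma tendsto_sinrTail_lowerThreshold (hρ : 0 < ρ) :
    Tendsto (fun n => sinrTail N ρ (lowerThreshold N ρ n)) atTop (𝓝[≠] 0) := by
  refine tendsto_nhdsWithin_iff.2 ⟨?_, ?_⟩
  · have hlim := (tendsto_mul_sinrTail_lowerThreshold_div_log N hρ).mul
      (tendsto_log_div_self_atTop.comp tendsto_natCast_atTop_atTop)
    rw [mul_zero] at hlim
    refine hlim.congr' ?_
    filter_upwards [eventually_gt_atTop 1] with n hn
    have hn1 : (1 : ℝ) < n := by exact_mod_cast hn
    have := log_pos hn1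
    simp only [Function.comp_apply]
    field_simp
  · filter_upwards [(tendsto_lowerThreshold_atTop N hρ).eventually_ge_atTop 0] with n hτ
    have : 0 < 1 + lowerThreshold N ρ n := by linarith
    exact (div_pos (exp_pos _) (pow_pos this N)).ne'

end Asymptotics

theorem maxSINR_lower_tail_general
    {Ω : Type*} [MeasurableSpace Ω] (P : Measure Ω) [IsProbabilityMeasure P]
    (N : ℕ) (ρ : ℝ) (hρ : 0 < ρ)
    (G : Option (Fin N) × ℕ → Ω → ℝ) (hGmeas : ∀ i, Measurable (G i))
    (hGindep : iIndepFun G P)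
    (hGdist : ∀ i, Measure.map (G i) P = expMeasure 1)
    (α β : ℕ → Ω → ℝ)
    (hα : ∀ k ω, α k ω = ρ * G (none, k) ω)
    (hβ : ∀ k ω, β k ω = ρ * ∑ j : Fin N, G (some j, k) ω)
    (Γ : ℕ → Ω → ℝ) (hΓ : ∀ n ω, Γ n ω = maxIcc n (fun k => α k ω / (1 + β k ω))) :
    Tendsto
      (fun n : ℕ =>
        Real.log
            (P {ω | Γ n ω ≤ ρ * Real.log n - ρ * ((N : ℝ) + 1) * Real.log (Real.log n)}).toReal
          / Real.log n)
      atTop (nhds (-(ρ ^ N)⁻¹)) := by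
  have hΓsinr : ∀ n ω, Γ n ω = maxIcc n (fun k => sinr ρ (fun i => G (i, k) ω)) := by
    simp only [hΓ, hα, hβ, sinr, implies_true]
  refine (tendsto_mul_log_one_sub_div (tendsto_sinrTail_lowerThreshold N hρ)
    (tendsto_mul_sinrTail_lowerThreshold_div_log N hρ)).congr' ?_
  filter_upwards [eventually_ge_atTop 1,
    (tendsto_lowerThreshold_atTop N hρ).eventually_ge_atTop 0] with n hn hτ
  simp only [hΓsinr]
  rw [← lowerThreshold, toReal_measure_maxIcc_sinr_le hGindep hGmeas hGdist hρ hτ hn,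
    Fintype.card_fin, log_pow]

/-- In the symmetric model, the max-SINR value `Γ n = max_{1≤k≤n} α k / (1 + β k)`
satisfies `log P(Γ n ≤ ρ log n - ρ (N+1) log (log n)) / log n → -ρ^(-N)` as `n → ∞`. -/
theorem maxSINR_lower_tail
    {Ω : Type*} [MeasurableSpace Ω] (P : Measure Ω) [IsProbabilityMeasure P]
    (N : ℕ) (hN : 1 ≤ N) (ρ : ℝ) (hρ : 0 < ρ)
    (G : Option (Fin N) × ℕ → Ω → ℝ) (hGmeas : ∀ i, Measurable (G i))
    (hGindep : iIndepFun G P)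
    (hGdist : ∀ i, Measure.map (G i) P = expMeasure 1)
    (α β : ℕ → Ω → ℝ)
    (hα : ∀ k ω, α k ω = ρ * G (none, k) ω)
    (hβ : ∀ k ω, β k ω = ρ * ∑ j : Fin N, G (some j, k) ω)
    (Γ : ℕ → Ω → ℝ) (hΓ : ∀ n ω, Γ n ω = maxIcc n (fun k => α k ω / (1 + β k ω))) :
    Tendsto
      (fun n : ℕ =>
        Real.log
            (P {ω | Γ n ω ≤ ρ * Real.log n - ρ * ((N : ℝ) + 1) * Real.log (Real.log n)}).toReal
          / Real.log n)
      atTop (nhds (-(ρ ^ N)⁻¹)) :=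
  maxSINR_lower_tail_general P N ρ hρ G hGmeas hGindep hGdist α β hα hβ Γ hΓ
end
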